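/- Let H be a real inner product space. The map g : H → H defined by g(ξ) = (1 + ‖ξ‖²)^{−1}·ξ is Lipschitz continuous with Lipschitz constant 1, i.e. ‖g(ξ) − g(η)‖ ≤ ‖ξ − η‖ for all ξ, η ∈ H. -/

import Mathlib

/-!
Expanding `‖c • ξ - d • η‖²` splits it into a radial part `(c ‖ξ‖ - d ‖η‖)²` and an angular
part `2 c d (‖ξ‖ ‖η‖ - ⟪ξ, η⟫)`, which is nonnegative by Cauchy–Schwarz. For
`c = (1 + ‖ξ‖²)⁻¹`, `d = (1 + ‖η‖²)⁻¹` we have `c d ≤ 1`, so the angular part can only shrink,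
and the radial part is controlled by the scalar map `x ↦ x / (1 + x²)`: its difference quotient
`(1 - x y) / ((1 + x²)(1 + y²))` has modulus at most `1`.
-/

open RealInnerProductSpace

lemma abs_one_sub_mul_le_one_add_sq_mul (x y : ℝ) : |1 - x * y| ≤ (1 + x ^ 2) * (1 + y ^ 2) :=
  abs_le.2 ⟨by nlinarith [sq_nonneg (x - y), sq_nonneg (x * y)],
    by nlinarith [sq_nonneg (x + y), sq_nonneg (x * y)]⟩

lemma abs_div_one_add_sq_sub_div_one_add_sq_le (x y : ℝ) :
    |x / (1 + x ^ 2) - y / (1 + y ^ 2)| ≤ |x - y| := by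
  have hx : 0 < 1 + x ^ 2 := by positivity
  have hy : 0 < 1 + y ^ 2 := by positivity
  have hdiff : x / (1 + x ^ 2) - y / (1 + y ^ 2)
      = (x - y) * ((1 - x * y) / ((1 + x ^ 2) * (1 + y ^ 2))) := by
    field_simp
    ring
  rw [hdiff, abs_mul]
  refine mul_le_of_le_one_right (abs_nonneg _) ?_
  rw [abs_div, abs_of_pos (mul_pos hx hy)]
  exact div_le_one_of_le₀ (abs_one_sub_mul_le_one_add_sq_mul x y) (mul_pos hx hy).le

lemma norm_smul_sub_smul_sq {H : Type*} [NormedAddCommGroup H] [InnerProductSpace ℝ H]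
    (c d : ℝ) (ξ η : H) :
    ‖c • ξ - d • η‖ ^ 2 = (c * ‖ξ‖ - d * ‖η‖) ^ 2 + 2 * (c * d) * (‖ξ‖ * ‖η‖ - ⟪ξ, η⟫) := by
  rw [norm_sub_sq_real, norm_smul, norm_smul, real_inner_smul_left, real_inner_smul_right,
    Real.norm_eq_abs, Real.norm_eq_abs, mul_pow, mul_pow, sq_abs, sq_abs]
  ring

theorem stmt_15 (H : Type*) [NormedAddCommGroup H] [InnerProductSpace ℝ H]
    (g : H → H) (hg : ∀ ξ : H, g ξ = (1 + ‖ξ‖ ^ 2)⁻¹ • ξ) :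
    ∀ ξ η : H, ‖g ξ - g η‖ ≤ ‖ξ - η‖ := by
  intro ξ η
  set c := (1 + ‖ξ‖ ^ 2)⁻¹
  set d := (1 + ‖η‖ ^ 2)⁻¹
  have hc : c ≤ 1 := inv_le_one_of_one_le₀ (le_add_of_nonneg_right (by positivity))
  have hd : d ≤ 1 := inv_le_one_of_one_le₀ (le_add_of_nonneg_right (by positivity))
  have hcd : c * d ≤ 1 := mul_le_one₀ hc (by positivity) hd
  have hcs : 0 ≤ ‖ξ‖ * ‖η‖ - ⟪ξ, η⟫ := sub_nonneg.2 (real_inner_le_norm ξ η)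
  have hradial : (c * ‖ξ‖ - d * ‖η‖) ^ 2 ≤ (‖ξ‖ - ‖η‖) ^ 2 := by
    refine sq_le_sq.2 ?_
    simpa only [c, d, inv_mul_eq_div] using
      abs_div_one_add_sq_sub_div_one_add_sq_le ‖ξ‖ ‖η‖
  have hsq : ‖g ξ - g η‖ ^ 2 ≤ ‖ξ - η‖ ^ 2 := by
    have hscaled := norm_smul_sub_smul_sq c d ξ η
    have hplain := norm_smul_sub_smul_sq 1 1 ξ η
    simp only [one_smul, one_mul, mul_one] at hplain
    rw [hg, hg, hscaled, hplain]
    linarith [mul_le_mul_of_nonneg_right hcd hcs]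
  exact (pow_le_pow_iff_left₀ (norm_nonneg _) (norm_nonneg _) two_ne_zero).1 hsq
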